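/- arXiv:math/9910001 — 6 statements merged into one kernel-verified Lean document; each statement's English description precedes it below -/
import Mathlib

section
/- Let H be a normal subgroup of a group K, and let V, W be complex representations of K whose restrictions to H are isomorphic and irreducible. Then the natural evaluation map W ⊗ Hom_H(W, V) → V sending w ⊗ f to f(w) is an isomorphism of K-representations. -/
open TensorProduct

/-- `Hom_H(W, V)`: the submodule of `H`-equivariant linear maps `W →ₗ[ℂ] V`. -/
noncomputable def equivariantHom {K : Type} [Group K] (H : Subgroup K)
    {V W : Type} [AddCommGroup V] [Module ℂ V] [AddCommGroup W] [Module ℂ W]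
    (ρV : Representation ℂ K V) (ρW : Representation ℂ K W) :
    Submodule ℂ (W →ₗ[ℂ] V) :=
  (Representation.linHom (ρW.comp H.subtype) (ρV.comp H.subtype)).invariants

/-- The evaluation map `W ⊗ Hom_H(W, V) → V`, `w ⊗ f ↦ f w`. -/
noncomputable def evalMap {K : Type} [Group K] (H : Subgroup K)
    {V W : Type} [AddCommGroup V] [Module ℂ V] [AddCommGroup W] [Module ℂ W]
    (ρV : Representation ℂ K V) (ρW : Representation ℂ K W) :
    W ⊗[ℂ] (equivariantHom H ρV ρW) →ₗ[ℂ] V :=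
  TensorProduct.lift
    ((LinearMap.lcomp ℂ V (equivariantHom H ρV ρW).subtype).comp LinearMap.applyₗ)

/-- Let `H` be a normal subgroup of `K`, and `V`, `W` complex representations of `K` whose
restrictions to `H` are isomorphic and irreducible.  Then `K` acts on `Hom_H(W, V)` by
conjugation (i.e. `Hom_H(W, V)` is stable under the conjugation action of `K` on
`W →ₗ[ℂ] V`), and the evaluation map `W ⊗ Hom_H(W, V) → V`, `w ⊗ f ↦ f w`, is an
isomorphism of `K`-representations. -/
theorem evalMap_iso {K : Type} [Group K] (H : Subgroup K) (hN : H.Normal)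
    {V W : Type} [AddCommGroup V] [Module ℂ V] [AddCommGroup W] [Module ℂ W]
    [FiniteDimensional ℂ V] [FiniteDimensional ℂ W]
    (ρV : Representation ℂ K V) (ρW : Representation ℂ K W)
    (hiso : ∃ e : W ≃ₗ[ℂ] V, ∀ (h : H) (w : W), e (ρW h w) = ρV h (e w))
    (hirr : Nontrivial V ∧
      ∀ p : Submodule ℂ V, (∀ (h : H), ∀ v ∈ p, ρV h v ∈ p) → p = ⊥ ∨ p = ⊤) :
    ∃ hstab : ∀ (k : K), ∀ f ∈ equivariantHom H ρV ρW,
        Representation.linHom ρW ρV k f ∈ equivariantHom H ρV ρW,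
      Function.Bijective (evalMap H ρV ρW) ∧
      ∀ (k : K) (w : W) (f : W →ₗ[ℂ] V) (hf : f ∈ equivariantHom H ρV ρW),
        evalMap H ρV ρW ((ρW k w) ⊗ₜ[ℂ]
            (⟨Representation.linHom ρW ρV k f, hstab k f hf⟩ : equivariantHom H ρV ρW)) =
          ρV k (evalMap H ρV ρW (w ⊗ₜ[ℂ] (⟨f, hf⟩ : equivariantHom H ρV ρW))) := by
  obtain ⟨e, he⟩ := hiso
  obtain ⟨hnt, hirr⟩ := hirr
  haveI := hnt
  have lin_apply : ∀ (h : H) (f : W →ₗ[ℂ] V) (w : W),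
      Representation.linHom (ρW.comp H.subtype) (ρV.comp H.subtype) h f w
        = ρV (h : K) (f (ρW ((h : K))⁻¹ w)) := by
    intro h f w
    rw [Representation.linHom_apply]
    simp [MonoidHom.comp_apply]
  -- unpack equivariance condition
  have mem_iff : ∀ f : W →ₗ[ℂ] V, f ∈ equivariantHom H ρV ρW ↔
      ∀ (h : H) (w : W), ρV h (f (ρW (h : K)⁻¹ w)) = f w := by
    intro f
    constructor
    · intro hf h w
      rw [← lin_apply h f w, (Representation.mem_invariants _ f).mp hf h]
    · intro hf
      refine (Representation.mem_invariants _ f).mpr fun h => ?_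
      ext w
      rw [lin_apply]
      exact hf h w
  have heMem : (e : W →ₗ[ℂ] V) ∈ equivariantHom H ρV ρW := by
    rw [mem_iff]
    intro h w
    simp only [LinearEquiv.coe_coe]
    rw [← he h, ← Module.End.mul_apply, ← map_mul, mul_inv_cancel, map_one,
      Module.End.one_apply]
  -- intertwining gives f (ρW h w) = ρV h (f w)
  have mem_comm : ∀ f : W →ₗ[ℂ] V, f ∈ equivariantHom H ρV ρW →
      ∀ (h : H) (w : W), f (ρW (h : K) w) = ρV h (f w) := by
    intro f hf h w
    have := (mem_iff f).mp hf h (ρW (h : K) w)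
    rw [← Module.End.mul_apply, ← map_mul, inv_mul_cancel, map_one,
      Module.End.one_apply] at this
    exact this.symm
  -- Schur: every f in Hom_H is a scalar multiple of e
  have hscalar : ∀ f : W →ₗ[ℂ] V, f ∈ equivariantHom H ρV ρW →
      ∃ c : ℂ, f = c • (e : W →ₗ[ℂ] V) := by
    intro f hf
    set g : Module.End ℂ V := f ∘ₗ (e.symm : V →ₗ[ℂ] W) with hg
    obtain ⟨μ, hμ⟩ := Module.End.exists_eigenvalue g
    have hinv : ∀ (h : H), ∀ v ∈ g.eigenspace μ, ρV h v ∈ g.eigenspace μ := by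
      intro h v hv
      rw [Module.End.mem_eigenspace_iff] at hv ⊢
      have hsymm : e.symm (ρV h v) = ρW (h : K) (e.symm v) := by
        apply e.injective
        rw [he h, e.apply_symm_apply, e.apply_symm_apply]
      calc g (ρV h v) = f (ρW (h : K) (e.symm v)) := by
            simp [hg, LinearMap.comp_apply, hsymm]
        _ = ρV h (g v) := by rw [mem_comm f hf h]; simp [hg]
        _ = μ • ρV h v := by rw [hv, map_smul]
    have heig : g.eigenspace μ = ⊤ := by
      rcases hirr (g.eigenspace μ) hinv with hbot | htop
      · exact absurd hbot hμ
      · exact htop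
    refine ⟨μ, ?_⟩
    ext w
    have : e w ∈ g.eigenspace μ := heig ▸ Submodule.mem_top
    rw [Module.End.mem_eigenspace_iff] at this
    simpa [hg, LinearMap.comp_apply] using this
  have evalMap_tmul : ∀ (w : W) (f : equivariantHom H ρV ρW),
      evalMap H ρV ρW (w ⊗ₜ[ℂ] f) = (f : W →ₗ[ℂ] V) w := by
    intro w f
    simp [evalMap]
  -- stability under K
  have hstab : ∀ (k : K), ∀ f ∈ equivariantHom H ρV ρW,
      Representation.linHom ρW ρV k f ∈ equivariantHom H ρV ρW := by
    intro k f hf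
    rw [mem_iff]
    intro h w
    have hconj : k⁻¹ * (h : K) * k ∈ H := by
      simpa using hN.conj_mem (h : K) h.2 k⁻¹
    have hstep := (mem_iff f).mp hf ⟨k⁻¹ * (h : K) * k, hconj⟩ (ρW k⁻¹ w)
    simp only [Representation.linHom_apply, LinearMap.comp_apply]
    have e1 : ∀ v, ρV (h : K) (ρV k v) = ρV k (ρV (k⁻¹ * (h : K) * k) v) := by
      intro v
      rw [← Module.End.mul_apply, ← map_mul, ← Module.End.mul_apply, ← map_mul]
      have h1 : ((h : K) * k) = k * (k⁻¹ * (h : K) * k) := by group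
      rw [h1]
    have e2 : ∀ x, ρW k⁻¹ (ρW ((h : K))⁻¹ x) = ρW (k⁻¹ * (h : K) * k)⁻¹ (ρW k⁻¹ x) := by
      intro x
      rw [← Module.End.mul_apply, ← map_mul, ← Module.End.mul_apply, ← map_mul]
      have h2 : (k⁻¹ * ((h : K))⁻¹) = (k⁻¹ * (h : K) * k)⁻¹ * k⁻¹ := by group
      rw [h2]
    rw [e1, e2]
    congr 1
  refine ⟨hstab, ?_, ?_⟩
  · -- bijectivity
    rw [Function.bijective_iff_has_inverse]
    refine ⟨fun v => e.symm v ⊗ₜ[ℂ] (⟨(e : W →ₗ[ℂ] V), heMem⟩ : equivariantHom H ρV ρW),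
      ?_, ?_⟩
    · intro x
      induction x using TensorProduct.induction_on with
      | zero => simp
      | tmul w f =>
        obtain ⟨c, hc⟩ := hscalar f f.2
        rw [evalMap_tmul]
        have hfc : f = c • (⟨(e : W →ₗ[ℂ] V), heMem⟩ : equivariantHom H ρV ρW) :=
          Subtype.ext hc
        rw [hfc]
        simp only [SetLike.val_smul, hc, LinearMap.smul_apply, map_smul,
          TensorProduct.tmul_smul, TensorProduct.smul_tmul]
        simp
      | add x y hx hy =>
        simp only [map_add, TensorProduct.add_tmul] at *
        rw [hx, hy]
    · intro v
      rw [evalMap_tmul]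
      simp
  · -- equivariance
    intro k w f hf
    rw [evalMap_tmul, evalMap_tmul]
    simp only [Representation.linHom_apply, LinearMap.comp_apply]
    congr 1
    rw [← Module.End.mul_apply, ← map_mul, inv_mul_cancel, map_one, Module.End.one_apply]
end

section
/- Let H be a normal subgroup of a group K and let W be a complex representation of K whose restriction to H is irreducible. If U and U' are one-dimensional representations of K that are trivial on H and W ⊗ U ≅ W ⊗ U' as K-representations, then U ≅ U'. Consequently, distinct one-dimensional K/H-representations produce non-isomorphic K-extensions W ⊗ U of res_H W. -/
/-- Let `H` be a normal subgroup of `K` and let `W` be a complex representation of `K`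
whose restriction to `H` is irreducible.  If `U`, `U'` are one-dimensional representations
of `K` (given as homomorphisms `u, u' : K →* ℂˣ`) that are trivial on `H`, and
`W ⊗ U ≅ W ⊗ U'` as `K`-representations, then `U ≅ U'` (i.e. `u = u'`).  Consequently,
distinct one-dimensional `K/H`-representations produce non-isomorphic `K`-extensions
`W ⊗ U` of the restriction of `W` to `H`. -/
theorem twist_inj {K : Type} [Group K] (H : Subgroup K) (hN : H.Normal)
    {W : Type} [AddCommGroup W] [Module ℂ W] [FiniteDimensional ℂ W]
    (ρ : Representation ℂ K W)
    (hirr : Nontrivial W ∧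
      ∀ p : Submodule ℂ W, (∀ (h : H), ∀ v ∈ p, ρ h v ∈ p) → p = ⊥ ∨ p = ⊤)
    (u u' : K →* ℂˣ) (hu : ∀ h ∈ H, u h = 1) (hu' : ∀ h ∈ H, u' h = 1)
    (hiso : ∃ e : W ≃ₗ[ℂ] W, ∀ (k : K) (w : W),
      e ((u k : ℂ) • ρ k w) = (u' k : ℂ) • ρ k (e w)) :
    u = u' := by
  obtain ⟨hnt, hsub⟩ := hirr
  obtain ⟨e, he⟩ := hiso
  -- e commutes with the H-action
  have hcomm : ∀ h : H, ∀ w : W, e (ρ h w) = ρ h (e w) := by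
    intro h w
    have := he h w
    rw [hu h h.2, hu' h h.2] at this
    simpa using this
  -- Schur: e is multiplication by a scalar c
  set f : Module.End ℂ W := e.toLinearMap with hf
  obtain ⟨c, hc⟩ := Module.End.exists_eigenvalue f
  set p := Module.End.eigenspace f c with hp
  have hinv : ∀ (h : H), ∀ v ∈ p, ρ h v ∈ p := by
    intro h v hv
    rw [hp, Module.End.mem_eigenspace_iff] at hv ⊢
    have : f (ρ h v) = ρ h (f v) := hcomm h v
    rw [this, hv, map_smul]
  rcases hsub p hinv with hbot | htop
  · exact absurd hbot hc
  -- so e w = c • w for all w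
  have hscal : ∀ w : W, e w = c • w := by
    intro w
    have : w ∈ p := htop ▸ Submodule.mem_top
    rwa [hp, Module.End.mem_eigenspace_iff] at this
  -- c ≠ 0
  obtain ⟨w₀, hw₀⟩ := exists_ne (0 : W)
  have hc0 : c ≠ 0 := by
    intro h0
    have := hscal w₀
    rw [h0, zero_smul] at this
    exact hw₀ (e.injective (by simpa using this))
  -- conclude u = u'
  ext k
  have key := he k w₀
  rw [hscal, hscal, map_smul] at key
  rw [smul_comm] at key
  have hρ : ρ k w₀ ≠ 0 := by
    intro h0
    apply hw₀
    have : ρ k⁻¹ (ρ k w₀) = 0 := by rw [h0, map_zero]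
    rwa [← Module.End.mul_apply, ← map_mul, inv_mul_cancel, map_one,
      Module.End.one_apply] at this
  have heq : ((u k : ℂ) * c) • ρ k w₀ = ((u' k : ℂ) * c) • ρ k w₀ := by
    rw [mul_smul, mul_smul]; exact key
  have h3 : (((u k : ℂ) * c) - ((u' k : ℂ) * c)) • ρ k w₀ = 0 := by
    rw [sub_smul, heq, sub_self]
  rcases smul_eq_zero.mp h3 with h4 | h4
  · exact mul_right_cancel₀ hc0 (sub_eq_zero.mp h4)
  · exact absurd h4 hρ
end

section
/- Let H be a normal subgroup of a finite group K with K/H cyclic, and let V be an irreducible complex representation of H whose character is K-invariant (i.e., χ(k⁻¹hk) = χ(h) for all k ∈ K, h ∈ H). Then V extends to a representation of K, i.e., there exists a K-representation W with res_H W ≅ V. -/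
/-!
Let `k₀ ∈ K` map to a generator of `K/H` and let `n` be the order of that generator, so that
`e := k₀ⁿ ∈ H`. The twist `h ↦ ρ(k₀ h k₀⁻¹)` has the same character as the irreducible `ρ`, so
by orthogonality of characters it is isomorphic to `ρ` through some `T`. Since conjugation by `k₀`
raised to the `n` is conjugation by `e`, the map `ρ(e)⁻¹ Tⁿ` commutes with `ρ`, hence is a nonzero
scalar `c` by Schur's lemma; `U := μ⁻¹ T` with `μⁿ = c` then satisfies `Uⁿ = ρ(e)`.
Finally `(h, m) ↦ ρ(h) Uᵐ` is a homomorphism on `H ⋊ ℤ` (with `ℤ` acting by conjugation by `k₀`)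
that vanishes on the kernel of the surjection `(h, m) ↦ h k₀ᵐ` onto `K`, so it descends to `K`.
-/

namespace MonoidHom

variable {G M : Type*} [Group G] [Group M] {u : M}

theorem zpow_mul_map_eq (f : G →* M) {α : MulAut G} (h : ∀ x, u * f x = f (α x) * u) (m : ℤ)
    (x : G) : u ^ m * f x = f ((α ^ m) x) * u ^ m := by
  induction m using Int.induction_on generalizing x with
  | zero => simp
  | succ m ih =>
    rw [zpow_add_one, zpow_add_one, mul_assoc, h, ← mul_assoc, ih, MulAut.mul_apply, mul_assoc]
  | pred m ih =>
    have h' := h (α⁻¹ x)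
    rw [MulAut.apply_inv_self] at h'
    calc u ^ (-(m : ℤ) - 1) * f x = u ^ (-(m : ℤ)) * f (α⁻¹ x) * u⁻¹ := by
          rw [eq_mul_inv_of_mul_eq h'.symm]; group
      _ = _ := by rw [ih, zpow_sub_one, zpow_sub_one, MulAut.mul_apply]; group

variable {N : Subgroup G} [N.Normal] {g : G} (f : N →* M)

theorem zpow_eq_map_of_coe_eq_zpow (e : N) (he : (e : G) = g ^ orderOf (g : G ⧸ N))
    (hpow : u ^ orderOf (g : G ⧸ N) = f e) (m : ℤ) (x : N) (hx : (x : G) = g ^ m) :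
    u ^ m = f x := by
  obtain ⟨t, rfl⟩ : (orderOf (g : G ⧸ N) : ℤ) ∣ m := by
    rw [orderOf_dvd_iff_zpow_eq_one, ← QuotientGroup.mk_zpow, ← hx]
    exact (QuotientGroup.eq_one_iff _).mpr x.2
  have : x = e ^ t := Subtype.ext (by simp [hx, he, zpow_mul])
  rw [zpow_mul, zpow_natCast, hpow, this, map_zpow]

theorem exists_extension_of_cyclic_quotient
    (hg : Function.Surjective fun m : ℤ => (g : G ⧸ N) ^ m)
    (hconj : ∀ x : N, u * f x = f (MulAut.conjNormal g x) * u)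
    (e : N) (he : (e : G) = g ^ orderOf (g : G ⧸ N)) (hpow : u ^ orderOf (g : G ⧸ N) = f e) :
    ∃ F : G →* M, ∀ x : N, F x = f x := by
  let φ : Multiplicative ℤ →* MulAut N := MulAut.conjNormal.comp (zpowersHom G g)
  let π : N ⋊[φ] Multiplicative ℤ →* G :=
    SemidirectProduct.lift N.subtype (zpowersHom G g) fun m => by
      ext x
      simp only [φ, MonoidHom.comp_apply, MulEquiv.coe_toMonoidHom, zpowersHom_apply,
        MulAut.conj_apply, Subgroup.coe_subtype, MulAut.conjNormal_apply]
  have hcompat : ∀ m, f.comp (φ m).toMonoidHom =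
      (MulAut.conj (zpowersHom M u m)).toMonoidHom.comp f := by
    intro m
    ext x
    show f (MulAut.conjNormal (g ^ m.toAdd) x) = u ^ m.toAdd * f x * (u ^ m.toAdd)⁻¹
    rw [map_zpow, eq_mul_inv_iff_mul_eq]
    exact (f.zpow_mul_map_eq hconj _ x).symm
  let F := SemidirectProduct.lift f (zpowersHom M u) hcompat
  have hπ : Function.Surjective π := by
    intro k
    obtain ⟨m, hm⟩ := hg k
    refine ⟨⟨⟨k * g ^ (-m), ?_⟩, Multiplicative.ofAdd m⟩, by simp [π]⟩
    rw [← QuotientGroup.eq_one_iff, QuotientGroup.mk_mul, QuotientGroup.mk_zpow, ← hm]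
    group
  have hker : π.ker ≤ F.ker := by
    rintro ⟨x, m⟩ hx
    replace hx : (x : G) * g ^ m.toAdd = 1 := hx
    have hinv : ((x⁻¹ : N) : G) = g ^ m.toAdd := by
      rw [Subgroup.coe_inv, inv_eq_of_mul_eq_one_right hx]
    show f x * u ^ m.toAdd = 1
    rw [zpow_eq_map_of_coe_eq_zpow f e he hpow _ _ hinv, map_inv, mul_inv_cancel]
  refine ⟨π.liftOfSurjective hπ ⟨F, hker⟩, fun x => ?_⟩
  have hπx : π (SemidirectProduct.inl x) = x := by simp [π]
  rw [← hπx, liftOfRightInverse_comp_apply]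
  exact SemidirectProduct.lift_inl f _ hcompat x

end MonoidHom

namespace Representation

variable {k G V W : Type*} [Field k] [AddCommGroup V] [Module k V] [AddCommGroup W] [Module k W]

section Monoid

variable [Monoid G] {ρ : Representation k G V}

theorem isIrreducible_of_forall_invariant [Nontrivial V]
    (h : ∀ p : Submodule k V, (∀ g, ∀ v ∈ p, ρ g v ∈ p) → p = ⊥ ∨ p = ⊤) : IsIrreducible ρ where
  exists_pair_ne := ⟨⊥, ⊤, fun h => bot_ne_top (congrArg Subrepresentation.toSubmodule h)⟩
  eq_bot_or_eq_top W := (h W.toSubmodule fun g _ hv => W.apply_mem_toSubmodule g hv).imp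
    Subrepresentation.ext Subrepresentation.ext

theorem IsIrreducible.exists_eq_smul_one [FiniteDimensional k V] [IsAlgClosed k]
    [IsIrreducible ρ] (S : V →ₗ[k] V) (hS : ∀ g, S * ρ g = ρ g * S) : ∃ c : k, S = c • 1 := by
  obtain ⟨c, hc⟩ := IsIrreducible.algebraMap_intertwiningMap_bijective_of_isAlgClosed.2
    (⟨S, hS⟩ : IntertwiningMap ρ ρ)
  exact ⟨c, congrArg IntertwiningMap.toLinearMap hc.symm⟩

end Monoid

variable [Group G] {ρ : Representation k G V} [FiniteDimensional k V] [IsAlgClosed k]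
  [IsIrreducible ρ]

theorem nonempty_equiv_of_character_eq [Finite G] [CharZero k] [FiniteDimensional k W]
    {σ : Representation k G W} (h : σ.character = ρ.character) : Nonempty (ρ.Equiv σ) := by
  have := Fintype.ofFinite G
  have : Invertible (Nat.card G : k) := invertibleOfNonzero (Nat.cast_ne_zero.2 Nat.card_pos.ne')
  have hrank : Module.finrank k (IntertwiningMap ρ σ) = 1 := by
    have := card_inv_mul_sum_char_mul_char_eq_finrank ρ σ
    rw [h, card_inv_mul_sum_char_mul_char_eq_finrank, IsIrreducible.finrank_intertwiningMap_self]
      at this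
    exact_mod_cast this.symm
  have : Nontrivial (IntertwiningMap ρ σ) := Module.nontrivial_of_finrank_eq_succ hrank
  obtain ⟨f, hf⟩ := exists_ne (0 : IntertwiningMap ρ σ)
  have hinj := (IsIrreducible.injective_or_eq_zero f).resolve_right hf
  have hdim : Module.finrank k V = Module.finrank k W := by
    have := congrFun h 1
    rw [char_one, char_one] at this
    exact_mod_cast this.symm
  exact ⟨f.ofBijective ⟨hinj,
    (LinearMap.injective_iff_surjective_of_finrank_eq_finrank hdim (f := f.toLinearMap)).1 hinj⟩⟩

theorem exists_unit_mul_eq_and_pow_eq {α : MulAut G} {e : G} {n : ℕ} (hn : n ≠ 0)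
    (hα : α ^ n = MulAut.conj e) (T : ρ.Equiv (ρ.comp α.toMonoidHom)) :
    ∃ U : (V →ₗ[k] V)ˣ,
      (∀ x, U * ρ.asGroupHom x = ρ.asGroupHom (α x) * U) ∧ U ^ n = ρ.asGroupHom e := by
  have : Nontrivial V := IsSimpleModule.nontrivial (MonoidAlgebra k G) ρ.asModule
  set t := LinearMap.GeneralLinearGroup.ofLinearEquiv T.toLinearEquiv
  have ht : ∀ x, t * ρ.asGroupHom x = ρ.asGroupHom (α x) * t :=
    fun x => Units.ext (T.isIntertwining' x)
  have hcomm : ∀ x, ρ.asGroupHom e⁻¹ * t ^ n * ρ.asGroupHom x =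
      ρ.asGroupHom x * (ρ.asGroupHom e⁻¹ * t ^ n) := by
    intro x
    have := ρ.asGroupHom.zpow_mul_map_eq ht n x
    rw [zpow_natCast, zpow_natCast, hα, MulAut.conj_apply] at this
    rw [mul_assoc, this]
    simp only [map_mul, map_inv]
    group
  obtain ⟨c, hc⟩ := IsIrreducible.exists_eq_smul_one (ρ := ρ) ↑(ρ.asGroupHom e⁻¹ * t ^ n)
    fun x => by simpa [asGroupHom_apply] using congrArg Units.val (hcomm x)
  have hc0 : c ≠ 0 := by
    rintro rfl
    rw [zero_smul] at hc
    exact Units.ne_zero _ hc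
  obtain ⟨μ, hμ⟩ := IsAlgClosed.exists_pow_nat_eq c (Nat.pos_of_ne_zero hn)
  have hμ0 : μ ≠ 0 := by rintro rfl; exact hc0 (by rw [← hμ, zero_pow hn])
  set ζ : (V →ₗ[k] V)ˣ :=
    Units.map (algebraMap k (V →ₗ[k] V) : k →* V →ₗ[k] V) (Units.mk0 μ hμ0)⁻¹
  have hζ : ∀ y, Commute ζ y := fun y => Units.ext (Algebra.commutes _ _)
  refine ⟨t * ζ, fun x => by rw [mul_assoc, (hζ _).eq, ← mul_assoc, ht, mul_assoc], ?_⟩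
  have htn : t ^ n = ρ.asGroupHom e * (ρ.asGroupHom e⁻¹ * t ^ n) := by
    rw [map_inv, mul_inv_cancel_left]
  rw [(hζ t).symm.mul_pow, htn, mul_assoc]
  ext1
  rw [Units.val_mul, Units.val_mul, hc]
  simp [ζ, Algebra.algebraMap_eq_smul_one, smul_pow, ← hμ, hμ0]

end Representation

open Representation in
/-- Let `H` be a normal subgroup of a finite group `K` with `K/H` cyclic, and let `V` be an
irreducible complex representation of `H` whose character is `K`-invariant.  Then `V`
extends to a representation of `K` (an extension on the same underlying space, which is
the same as a `K`-representation `W` with `res_H W ≅ V`). -/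
theorem extension_cyclic_quotient {K : Type} [Group K] [Finite K]
    (H : Subgroup K) [hN : H.Normal] (hcyc : IsCyclic (K ⧸ H))
    {V : Type} [AddCommGroup V] [Module ℂ V] [FiniteDimensional ℂ V]
    (ρ : Representation ℂ H V)
    (hirr : Nontrivial V ∧
      ∀ p : Submodule ℂ V, (∀ (h : H), ∀ v ∈ p, ρ h v ∈ p) → p = ⊥ ∨ p = ⊤)
    (hinv : ∀ (k : K) (h : H),
      LinearMap.trace ℂ V (ρ ⟨k⁻¹ * (h : K) * k, by simpa using hN.conj_mem h h.2 k⁻¹⟩) =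
        LinearMap.trace ℂ V (ρ h)) :
    ∃ σ : Representation ℂ K V, ∀ h : H, σ (h : K) = ρ h := by
  have := hirr.1
  have : IsIrreducible ρ := isIrreducible_of_forall_invariant hirr.2
  obtain ⟨g, hg⟩ := hcyc
  obtain ⟨k₀, rfl⟩ := QuotientGroup.mk_surjective g
  obtain ⟨e, he⟩ : ∃ e : H, (e : K) = k₀ ^ orderOf (k₀ : K ⧸ H) :=
    ⟨⟨_, (QuotientGroup.eq_one_iff _).mp (by rw [QuotientGroup.mk_pow, pow_orderOf_eq_one])⟩,
      rfl⟩
  let ρ' : Representation ℂ H V := ρ.comp (MulAut.conjNormal k₀).toMonoidHom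
  have hchar : ρ'.character = ρ.character := by
    funext h
    show LinearMap.trace ℂ V (ρ (MulAut.conjNormal k₀ h)) = LinearMap.trace ℂ V (ρ h)
    rw [← hinv k₀⁻¹ h]
    congr 2
    exact Subtype.ext (by simp)
  obtain ⟨T⟩ := nonempty_equiv_of_character_eq hchar
  obtain ⟨U, hUconj, hUpow⟩ :=
    exists_unit_mul_eq_and_pow_eq (orderOf_pos (k₀ : K ⧸ H)).ne'
    (by rw [← map_pow, ← he, MulAut.conjNormal_val]) T
  obtain ⟨F, hF⟩ := ρ.asGroupHom.exists_extension_of_cyclic_quotient hg hUconj e he hUpow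
  exact ⟨(Units.coeHom _).comp F, fun h => by simp [hF, asGroupHom_apply]⟩
end

section
/- Let H be a normal subgroup of a finite group K such that K/H is cyclic, and let V be an irreducible complex H-representation with K-invariant character that extends to K. Then the number of isomorphism classes of K-extensions of V equals the order of K/H. -/
/-- The type of extensions of an `H`-representation `ρ` to `K` (on the same space). -/
def Extensions {K : Type} [Group K] (H : Subgroup K)
    {V : Type} [AddCommGroup V] [Module ℂ V] (ρ : Representation ℂ H V) :=
  {σ : Representation ℂ K V // ∀ h : H, σ (h : K) = ρ h}

/-- Two extensions are equivalent iff they are isomorphic as `K`-representations. -/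
def extSetoid {K : Type} [Group K] (H : Subgroup K)
    {V : Type} [AddCommGroup V] [Module ℂ V] (ρ : Representation ℂ H V) :
    Setoid (Extensions H ρ) where
  r σ τ := ∃ e : V ≃ₗ[ℂ] V, ∀ (k : K) (v : V), e (σ.1 k v) = τ.1 k (e v)
  iseqv := by
    refine ⟨fun σ => ⟨LinearEquiv.refl ℂ V, by simp⟩, ?_, ?_⟩
    · rintro σ τ ⟨e, he⟩
      refine ⟨e.symm, fun k v => e.injective ?_⟩
      simp [he k (e.symm v)]
    · rintro σ τ υ ⟨e, he⟩ ⟨f, hf⟩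
      exact ⟨e.trans f, fun k v => by simp [LinearEquiv.trans_apply, he, hf]⟩

/-- Twist an extension by a character of `K ⧸ H`. -/
def twist {K : Type} [Group K] {H : Subgroup K} [H.Normal]
    {V : Type} [AddCommGroup V] [Module ℂ V] {ρ : Representation ℂ H V}
    (W : Extensions H ρ) (χ : (K ⧸ H) →* ℂˣ) : Extensions H ρ :=
  ⟨{ toFun := fun k => ((χ (QuotientGroup.mk k) : ℂˣ) : ℂ) • W.1 k
     map_one' := by simp
     map_mul' := fun k k' => by
       ext v
       simp only [QuotientGroup.mk_mul, map_mul, Units.val_mul, LinearMap.smul_apply,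
         Module.End.mul_apply, mul_smul, LinearMap.map_smul] }
   , fun h => by
       have h1 : (QuotientGroup.mk (h : K) : K ⧸ H) = 1 :=
         (QuotientGroup.eq_one_iff _).mpr h.2
       ext v
       simp [h1, W.2 h] ⟩

lemma twist_apply {K : Type} [Group K] {H : Subgroup K} [H.Normal]
    {V : Type} [AddCommGroup V] [Module ℂ V] {ρ : Representation ℂ H V}
    (W : Extensions H ρ) (χ : (K ⧸ H) →* ℂˣ) (k : K) (v : V) :
    (twist W χ).1 k v = ((χ (QuotientGroup.mk k) : ℂˣ) : ℂ) • W.1 k v := rfl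

/-- The conjugation relation satisfied by any extension. -/
lemma conj_rel {K : Type} [Group K] {H : Subgroup K} [hN : H.Normal]
    {V : Type} [AddCommGroup V] [Module ℂ V] {ρ : Representation ℂ H V}
    (τ : Extensions H ρ) (k : K) (h : H) (v : V) :
    τ.1 k (ρ h v) = ρ ⟨k * h * k⁻¹, hN.conj_mem h h.2 k⟩ (τ.1 k v) := by
  have e1 : τ.1 k (ρ h v) = τ.1 (k * (h : K)) v := by
    rw [map_mul, Module.End.mul_apply, τ.2 h]
  have e2 : ρ ⟨k * h * k⁻¹, hN.conj_mem h h.2 k⟩ (τ.1 k v) =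
      τ.1 (k * (h : K) * k⁻¹ * k) v := by
    rw [map_mul, Module.End.mul_apply, ← τ.2 ⟨k * h * k⁻¹, hN.conj_mem h h.2 k⟩]
  rw [e1, e2]
  congr 1
  group

/-- Let `H` be a normal subgroup of a finite group `K` with `K/H` cyclic, and let `V` be an
irreducible complex `H`-representation with `K`-invariant character that extends to `K`.
Then the number of isomorphism classes of `K`-extensions of `V` equals the order of
`K/H`. -/
theorem card_extensions_cyclic {K : Type} [Group K] [Finite K]
    (H : Subgroup K) [hN : H.Normal] (hcyc : IsCyclic (K ⧸ H))
    {V : Type} [AddCommGroup V] [Module ℂ V] [FiniteDimensional ℂ V]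
    (ρ : Representation ℂ H V)
    (hirr : Nontrivial V ∧
      ∀ p : Submodule ℂ V, (∀ (h : H), ∀ v ∈ p, ρ h v ∈ p) → p = ⊥ ∨ p = ⊤)
    (hinv : ∀ (k : K) (h : H),
      LinearMap.trace ℂ V (ρ ⟨k⁻¹ * (h : K) * k, by simpa using hN.conj_mem h h.2 k⁻¹⟩) =
        LinearMap.trace ℂ V (ρ h))
    (hext : Nonempty (Extensions H ρ)) :
    Nat.card (Quotient (extSetoid H ρ)) = Nat.card (K ⧸ H) := by
  classical
  obtain ⟨hnt, hsub⟩ := hirr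
  obtain ⟨W⟩ := hext
  -- Schur's lemma
  have schur : ∀ T : V →ₗ[ℂ] V, (∀ (h : H) (v : V), T (ρ h v) = ρ h (T v)) →
      ∃ c : ℂ, ∀ v, T v = c • v := by
    intro T hT
    obtain ⟨c, hc⟩ := Module.End.exists_eigenvalue (T : Module.End ℂ V)
    refine ⟨c, ?_⟩
    have hinvt : ∀ (h : H), ∀ v ∈ Module.End.eigenspace T c,
        ρ h v ∈ Module.End.eigenspace T c := by
      intro h v hv
      rw [Module.End.mem_eigenspace_iff] at hv ⊢
      rw [hT, hv, map_smul]
    rcases hsub _ hinvt with h0 | h1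
    · exact absurd h0 hc
    · intro v
      have hv : v ∈ Module.End.eigenspace T c := h1 ▸ Submodule.mem_top
      exact Module.End.mem_eigenspace_iff.mp hv
  -- cancellation helper
  have smul_cancel : ∀ (a b : ℂ) (w : V), w ≠ 0 → a • w = b • w → a = b := by
    intro a b w hw hab
    by_contra hne
    have : (a - b) • w = 0 := by rw [sub_smul, hab, sub_self]
    rcases smul_eq_zero.mp this with h | h
    · exact hne (sub_eq_zero.mp h)
    · exact hw h
  obtain ⟨v₀, hv₀⟩ := exists_ne (0 : V)
  -- extensions are injective on each group element
  have ext_inj : ∀ (τ : Extensions H ρ) (k : K) (v : V), τ.1 k v = 0 → v = 0 := by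
    intro τ k v hv
    have : τ.1 k⁻¹ (τ.1 k v) = v := by
      rw [← Module.End.mul_apply, ← map_mul, inv_mul_cancel, map_one, Module.End.one_apply]
    rw [hv, map_zero] at this
    exact this.symm
  -- the twisting map into the quotient
  set F : ((K ⧸ H) →* ℂˣ) → Quotient (extSetoid H ρ) :=
    fun χ => Quotient.mk _ (twist W χ) with hF
  have hFbij : Function.Bijective F := by
    constructor
    · -- injectivity
      intro χ χ' hχ
      obtain ⟨e, he⟩ := Quotient.exact hχ
      -- e intertwines ρ with itself
      have heH : ∀ (h : H) (v : V), e (ρ h v) = ρ h (e v) := by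
        intro h v
        have h1 : (QuotientGroup.mk (h : K) : K ⧸ H) = 1 :=
          (QuotientGroup.eq_one_iff _).mpr h.2
        have := he (h : K) v
        rw [twist_apply, twist_apply, h1, map_one, Units.val_one, one_smul, map_one,
          Units.val_one, one_smul, W.2 h] at this
        exact this
      obtain ⟨c, hcv⟩ := schur (e : V →ₗ[ℂ] V) heH
      have hc0 : c ≠ 0 := by
        intro h0
        apply hv₀
        apply e.injective
        rw [show e v₀ = c • v₀ from hcv v₀, h0, zero_smul, map_zero]
      refine MonoidHom.ext fun q => ?_
      obtain ⟨k, rfl⟩ := QuotientGroup.mk_surjective q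
      have hk := he k v₀
      rw [twist_apply, twist_apply] at hk
      rw [map_smul, show e (W.1 k v₀) = c • W.1 k v₀ from hcv _,
        show e v₀ = c • v₀ from hcv _, map_smul] at hk
      have hW0 : W.1 k v₀ ≠ 0 := fun h => hv₀ (ext_inj W k v₀ h)
      have : ((χ (QuotientGroup.mk k) : ℂˣ) : ℂ) * c =
          ((χ' (QuotientGroup.mk k) : ℂˣ) : ℂ) * c := by
        apply smul_cancel _ _ _ hW0
        rw [mul_smul, mul_smul]
        exact hk
      exact Units.ext (mul_right_cancel₀ hc0 this)
    · -- surjectivity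
      intro q
      obtain ⟨σ, rfl⟩ := Quotient.exists_rep q
      -- for each k, σ k ∘ (W k)⁻¹ commutes with ρ
      have key : ∀ k : K, ∃ c : ℂ, ∀ v, σ.1 k v = c • W.1 k v := by
        intro k
        have hcomm : ∀ (h : H) (v : V),
            (σ.1 k ∘ₗ W.1 k⁻¹) (ρ h v) = ρ h ((σ.1 k ∘ₗ W.1 k⁻¹) v) := by
          intro h v
          simp only [LinearMap.comp_apply]
          set h' : H := ⟨k⁻¹ * (h : K) * (k⁻¹)⁻¹, hN.conj_mem h h.2 k⁻¹⟩ with hh'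
          have e1 : W.1 k⁻¹ (ρ h v) = ρ h' (W.1 k⁻¹ v) := conj_rel W k⁻¹ h v
          have e2 : σ.1 k (ρ h' (W.1 k⁻¹ v)) =
              ρ ⟨k * h' * k⁻¹, hN.conj_mem h' h'.2 k⟩ (σ.1 k (W.1 k⁻¹ v)) :=
            conj_rel σ k h' (W.1 k⁻¹ v)
          have e3 : (⟨k * h' * k⁻¹, hN.conj_mem h' h'.2 k⟩ : H) = h := by
            apply Subtype.ext
            simp only [hh']
            group
          rw [e1, e2, e3]
        obtain ⟨c, hc⟩ := schur _ hcomm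
        refine ⟨c, fun v => ?_⟩
        have hWW : W.1 k⁻¹ (W.1 k v) = v := by
          rw [← Module.End.mul_apply, ← map_mul, inv_mul_cancel, map_one, Module.End.one_apply]
        have := hc (W.1 k v)
        rwa [LinearMap.comp_apply, hWW] at this
      choose c hc using key
      have hc0 : ∀ k, c k ≠ 0 := by
        intro k h0
        apply hv₀
        apply ext_inj σ k
        rw [hc k v₀, h0, zero_smul]
      have hcmul : ∀ k k', c (k * k') = c k * c k' := by
        intro k k'
        have hW0 : W.1 (k * k') v₀ ≠ 0 := fun h => hv₀ (ext_inj W (k * k') v₀ h)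
        apply smul_cancel _ _ _ hW0
        have : σ.1 (k * k') v₀ = (c k * c k') • W.1 (k * k') v₀ := by
          rw [map_mul, Module.End.mul_apply, hc k', map_smul, hc k, map_mul,
            Module.End.mul_apply, mul_smul, smul_comm]
        rw [← this, hc (k * k') v₀]
      have hcH : ∀ h : H, c (h : K) = 1 := by
        intro h
        have hW0 : W.1 (h : K) v₀ ≠ 0 := fun hh => hv₀ (ext_inj W (h : K) v₀ hh)
        apply smul_cancel _ _ _ hW0
        rw [← hc (h : K) v₀, one_smul, σ.2 h, ← W.2 h]
      -- build the character
      set χ₀ : K →* ℂˣ := MonoidHom.mk' (fun k => Units.mk0 (c k) (hc0 k))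
        (fun k k' => by ext; simp [hcmul]) with hχ₀
      have hker : H ≤ χ₀.ker := by
        intro h hh
        simp only [MonoidHom.mem_ker, hχ₀, MonoidHom.mk'_apply]
        exact Units.ext (by simpa using hcH ⟨h, hh⟩)
      set χ : (K ⧸ H) →* ℂˣ := QuotientGroup.lift H χ₀ hker with hχ
      refine ⟨χ, ?_⟩
      apply Quotient.sound
      refine ⟨LinearEquiv.refl ℂ V, fun k v => ?_⟩
      simp only [LinearEquiv.refl_apply, twist_apply]
      show (c k) • (W.1 k) v = σ.1 k v
      exact (hc k v).symm
  have h1 : Nat.card ((K ⧸ H) →* ℂˣ) = Nat.card (Quotient (extSetoid H ρ)) :=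
    Nat.card_eq_of_bijective F hFbij
  -- character count for the cyclic (hence abelian) group K ⧸ H
  letI : CommGroup (K ⧸ H) := IsCyclic.commGroup
  haveI : NeZero ((Monoid.exponent (K ⧸ H) : ℂ)) :=
    ⟨by exact_mod_cast Monoid.exponent_ne_zero_of_finite⟩
  obtain ⟨E⟩ := CommGroup.monoidHom_mulEquiv_of_hasEnoughRootsOfUnity (K ⧸ H) ℂ
  rw [← h1]
  exact Nat.card_congr E.toEquiv
end

section
/- Let G be a finite group, H a normal subgroup, and suppose G is generated by H together with elements a and b such that aⁿ ∈ H, b² ∈ H, and (ab)² ∈ H, with the images of a and b generating the dihedral group G/H ≅ D_n. Let φ: H → ℂˣ be a one-dimensional representation of H whose character is G-invariant. Then φ(aⁿ)² = φ(a b a b⁻¹)ⁿ. -/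
/-! Put `c = a b a b⁻¹ ∈ H`, so that `b a b⁻¹ = a⁻¹ c`. Expanding `(a⁻¹ c)ⁿ` as `a⁻ⁿ` times a
product of `n` conjugates of `c`, `G`-invariance of `φ` gives `φ(b aⁿ b⁻¹) = φ(aⁿ)⁻¹ φ(c)ⁿ`,
while invariance under conjugation by `b` gives `φ(b aⁿ b⁻¹) = φ(aⁿ)`. -/

namespace Subgroup

variable {G M : Type*} [Group G] [CommMonoid M] {H : Subgroup G} [hN : H.Normal] {φ : H →* M}

theorem map_eq_of_coe_eq_conj
    (hinv : ∀ (g : G) (h : H),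
      φ ⟨g⁻¹ * (h : G) * g, by simpa using hN.conj_mem h h.2 g⁻¹⟩ = φ h)
    (g : G) {h h' : H} (hh' : (h' : G) = g * h * g⁻¹) : φ h' = φ h := by
  rw [← hinv g⁻¹ h]
  exact congrArg φ (Subtype.ext (by simpa using hh'))

theorem exists_mul_pow_eq_pow_mul_map_eq_pow
    (hinv : ∀ (g : G) (h : H),
      φ ⟨g⁻¹ * (h : G) * g, by simpa using hN.conj_mem h h.2 g⁻¹⟩ = φ h)
    (x : G) (c : H) (m : ℕ) : ∃ h : H, (x * c) ^ m = x ^ m * h ∧ φ h = φ c ^ m := by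
  induction m with
  | zero => exact ⟨1, by simp, by simp⟩
  | succ m ih =>
    obtain ⟨h, hpow, hφ⟩ := ih
    refine ⟨⟨x⁻¹ * h * x, by simpa using hN.conj_mem h h.2 x⁻¹⟩ * c, ?_, ?_⟩
    · rw [pow_succ, hpow]
      push_cast
      group
    · rw [map_mul, pow_succ, ← hφ, hinv]

end Subgroup

/-- Let `G` be a finite group, `H` a normal subgroup, and suppose `G` is generated by `H`
together with elements `a` and `b` such that `aⁿ ∈ H`, `b² ∈ H`, `(ab)² ∈ H`, with the
images of `a` and `b` generating `G/H ≅ D_n` (`a` mapping to the rotation of order `n`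
and `b` to a reflection; in particular `a b a b⁻¹ ∈ H`).  If `φ : H → ℂˣ` is a
one-dimensional representation of `H` whose character is `G`-invariant, then
`φ(aⁿ)² = φ(a b a b⁻¹)ⁿ`. -/
theorem dihedral_relation {G : Type} [Group G]
    (H : Subgroup G) [hN : H.Normal] (n : ℕ) (a b : G)
    (ha : a ^ n ∈ H)
    (hmem : a * b * a * b⁻¹ ∈ H)
    (φ : H →* ℂˣ)
    (hinv : ∀ (g : G) (h : H),
      φ ⟨g⁻¹ * (h : G) * g, by simpa using hN.conj_mem h h.2 g⁻¹⟩ = φ h) :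
    (φ ⟨a ^ n, ha⟩) ^ 2 = (φ ⟨a * b * a * b⁻¹, hmem⟩) ^ n := by
  set c : H := ⟨a * b * a * b⁻¹, hmem⟩
  set an : H := ⟨a ^ n, ha⟩
  obtain ⟨h, hpow, hφ⟩ := Subgroup.exists_mul_pow_eq_pow_mul_map_eq_pow hinv a⁻¹ c n
  have hconj_eq : b * a * b⁻¹ = a⁻¹ * c := by
    simp only [c]
    group
  have hconj_pow : b * a ^ n * b⁻¹ = (a ^ n)⁻¹ * h := by
    rw [← conj_pow, hconj_eq, hpow, inv_pow]
  have hφ_conj : φ an = φ an⁻¹ * φ c ^ n := by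
    rw [← hφ, ← map_mul]
    exact (Subgroup.map_eq_of_coe_eq_conj hinv b (by simp [an, hconj_pow])).symm
  rw [sq, ← eq_inv_mul_iff_mul_eq, ← map_inv]
  exact hφ_conj
end

section
/- With G, H, a, b as in the dihedral setup (G/H ≅ D_n with n even, aⁿ, b², (ab)² ∈ H), a G-invariant one-dimensional representation φ: H → ℂˣ extends to a one-dimensional representation of G if and only if φ(aⁿ) = φ(a b a b⁻¹)^{n/2}. -/
/-!
Write `c = a b a b⁻¹`. An extension `ψ` has `ψ c = (ψ a)²`, which gives the necessity of
`φ(aⁿ) = φ(c)^(n/2)`. Conversely, extend `φ` in two cyclic steps along `H ≤ H₁ ≤ G`, where `H₁`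
is the preimage of the rotations. A character of a normal subgroup that is invariant under
conjugation by `a` extends to `H⟨a⟩` by `h aᵏ ↦ φ h αᵏ` as soon as `αᵈ = φ(aᵈ)`, `d` being the
order of `a` modulo `H`. Here `d = n`, and a square root `α` of `φ c` works by the hypothesis.
The resulting `ψ₁` is invariant under `b`, because `b a b⁻¹ = a⁻¹ c` and
`ψ₁(a⁻¹ c) = α⁻¹ α² = α`; so it extends once more, along `b` of order 2 modulo `H₁`, by a
square root of `ψ₁(b²)`.
-/

theorem IsAlgClosed.exists_units_pow_eq {k : Type*} [Field k] [IsAlgClosed k] (u : kˣ) {d : ℕ}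
    (hd : 0 < d) : ∃ v : kˣ, v ^ d = u := by
  obtain ⟨z, hz⟩ := IsAlgClosed.exists_pow_nat_eq (u : k) hd
  have hz0 : z ≠ 0 := ne_zero_pow hd.ne' (hz ▸ u.ne_zero)
  exact ⟨Units.mk0 z hz0, Units.ext (by simpa using hz)⟩

theorem Int.units_mem_zpowers_neg_one (u : ℤˣ) : u ∈ Subgroup.zpowers (-1) := by
  rcases Int.units_eq_one_or u with rfl | rfl
  · exact one_mem _
  · exact Subgroup.mem_zpowers _

theorem Int.orderOf_units_neg_one : orderOf (-1 : ℤˣ) = 2 :=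
  orderOf_eq_prime (by decide) (by decide)

namespace DihedralGroup

def sign (n : ℕ) : DihedralGroup n →* ℤˣ where
  toFun
    | r _ => 1
    | sr _ => -1
  map_one' := rfl
  map_mul' := by rintro (i | i) (j | j) <;> simp [r_mul_r, r_mul_sr, sr_mul_r, sr_mul_sr]

@[simp] theorem sign_r {n : ℕ} (i : ZMod n) : sign n (r i) = 1 := rfl

@[simp] theorem sign_sr {n : ℕ} (i : ZMod n) : sign n (sr i) = -1 := rfl

end DihedralGroup

theorem MonoidHom.exists_mem_ker_mul_zpow_eq {G Q : Type*} [Group G] [Group Q] (E : G →* Q)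
    {a x : G} (hx : E x ∈ Subgroup.zpowers (E a)) : ∃ h ∈ E.ker, ∃ k : ℤ, h * a ^ k = x := by
  obtain ⟨k, hk⟩ := hx
  exact ⟨x * a ^ (-k), by simp [hk], k, by group⟩

theorem MonoidHom.zpow_mem_ker_iff {G Q : Type*} [Group G] [Group Q] (E : G →* Q) (a : G)
    (k : ℤ) : a ^ k ∈ E.ker ↔ (orderOf (E a) : ℤ) ∣ k := by
  rw [MonoidHom.mem_ker, map_zpow, orderOf_dvd_iff_zpow_eq_one]

theorem MonoidHom.exists_mem_ker_mul_zpow_eq_of_eq_neg_one {G : Type*} [Group G] (χ : G →* ℤˣ)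
    {b : G} (hb : χ b = -1) (x : G) : ∃ h ∈ χ.ker, ∃ k : ℤ, h * b ^ k = x :=
  χ.exists_mem_ker_mul_zpow_eq (hb ▸ Int.units_mem_zpowers_neg_one (χ x))

theorem DihedralGroup.exists_mem_ker_mul_zpow_eq_of_sign_eq_one {G : Type*} [Group G] {n : ℕ}
    (E : G →* DihedralGroup n) {a : G} (ha : E a = r 1) {x : G} (hx : sign n (E x) = 1) :
    ∃ h ∈ E.ker, ∃ k : ℤ, h * a ^ k = x := by
  refine E.exists_mem_ker_mul_zpow_eq (ha ▸ ?_)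
  rcases hEx : E x with i | i
  · exact ⟨ZMod.cast i, (r_one_zpow _).trans (by rw [ZMod.intCast_zmod_cast])⟩
  · simp [hEx] at hx

theorem MulAut.apply_zpow_apply_of_invariant {N X : Type*} [Group N] (φ : N → X)
    {f : MulAut N} (hf : ∀ h, φ (f h) = φ h) (k : ℤ) (h : N) : φ ((f ^ k) h) = φ h := by
  induction k using Int.induction_on generalizing h with
  | zero => rfl
  | succ k ih => rw [zpow_add_one, MulAut.mul_apply, ih, hf]
  | pred k ih =>
    rw [zpow_sub_one, MulAut.mul_apply, ih, ← hf, MulAut.inv_apply, MulEquiv.apply_symm_apply]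

theorem MonoidHom.map_mul_mul_mul_inv {G M : Type*} [Group G] [CommGroup M] (ψ : G →* M)
    (a b : G) : ψ (a * b * a * b⁻¹) = ψ a ^ 2 := by
  rw [map_mul, map_mul, map_mul, map_inv, mul_right_comm _ (ψ b), mul_inv_cancel_right, sq]

section Extension

variable {G M : Type*} [Group G] [CommGroup M] {H K : Subgroup G} {a : G}

theorem MonoidHom.ext_of_forall_mem_mul_zpow (hHK : H ≤ K) (haK : a ∈ K)
    (hK : ∀ x ∈ K, ∃ h ∈ H, ∃ k : ℤ, h * a ^ k = x) {ψ ψ' : K →* M}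
    (hH : ∀ h : H, ψ (Subgroup.inclusion hHK h) = ψ' (Subgroup.inclusion hHK h))
    (ha : ψ ⟨a, haK⟩ = ψ' ⟨a, haK⟩) : ψ = ψ' := by
  ext ⟨x, hx⟩
  obtain ⟨h, hh, k, rfl⟩ := hK x hx
  have hx : (⟨h * a ^ k, hx⟩ : K) = Subgroup.inclusion hHK ⟨h, hh⟩ * ⟨a, haK⟩ ^ k := rfl
  rw [hx, map_mul, map_mul, map_zpow, map_zpow, hH, ha]

theorem MonoidHom.forall_eq_zpow_of_dvd {d : ℕ} (hd : ∀ k : ℤ, a ^ k ∈ H → (d : ℤ) ∣ k)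
    (φ : H →* M) {h₀ : H} (hh₀ : (h₀ : G) = a ^ d) {α : M} (hα : φ h₀ = α ^ d) (h : H) (k : ℤ)
    (hk : (h : G) = a ^ k) : φ h = α ^ k := by
  obtain ⟨m, rfl⟩ := hd k (hk ▸ h.2)
  have : h = h₀ ^ m := Subtype.ext (by rw [hk, Subgroup.coe_zpow, hh₀, zpow_mul, zpow_natCast])
  rw [this, map_zpow, hα, zpow_mul, zpow_natCast]

-- `hα` is exactly what makes `h * a ^ k ↦ φ h * α ^ k` well defined.
theorem MonoidHom.exists_extension_of_forall_mem_mul_zpow [H.Normal] (hHK : H ≤ K) (haK : a ∈ K)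
    (hK : ∀ x ∈ K, ∃ h ∈ H, ∃ k : ℤ, h * a ^ k = x) (φ : H →* M)
    (hφ : ∀ h, φ (MulAut.conjNormal a h) = φ h) {α : M}
    (hα : ∀ (h : H) (k : ℤ), (h : G) = a ^ k → φ h = α ^ k) :
    ∃ ψ : K →* M, (∀ h : H, ψ (Subgroup.inclusion hHK h) = φ h) ∧ ψ ⟨a, haK⟩ = α := by
  have hwd : ∀ (h₁ h₂ : H) (k₁ k₂ : ℤ), (h₁ : G) * a ^ k₁ = h₂ * a ^ k₂ →
      φ h₁ * α ^ k₁ = φ h₂ * α ^ k₂ := by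
    intro h₁ h₂ k₁ k₂ he
    have hquot : φ (h₂⁻¹ * h₁) = α ^ (k₂ - k₁) := hα _ _ <| by
      rw [Subgroup.coe_mul, Subgroup.coe_inv, inv_mul_eq_iff_eq_mul, zpow_sub,
        ← mul_assoc, ← he, mul_inv_cancel_right]
    rw [map_mul, map_inv, inv_mul_eq_iff_eq_mul] at hquot
    rw [hquot, zpow_sub, mul_assoc, inv_mul_cancel_right]
  have hK' := hK
  choose hpart hpart_mem kpart hkpart using hK'
  let f : K → M := fun x => φ ⟨hpart x x.2, hpart_mem x x.2⟩ * α ^ kpart x x.2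
  have hf : ∀ (x : K) (h : H) (k : ℤ), (h : G) * a ^ k = x → f x = φ h * α ^ k :=
    fun x h k hx => hwd _ _ _ _ ((hkpart x x.2).trans hx.symm)
  have hconj : ∀ (k : ℤ) (h : H), φ (MulAut.conjNormal (a ^ k) h) = φ h := by
    intro k h
    rw [map_zpow]
    exact MulAut.apply_zpow_apply_of_invariant φ hφ k h
  have hmul : ∀ x y : K, f (x * y) = f x * f y := by
    rintro ⟨x, hx⟩ ⟨y, hy⟩
    obtain ⟨h₁, hh₁, k₁, rfl⟩ := hK x hx
    obtain ⟨h₂, hh₂, k₂, rfl⟩ := hK y hy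
    have hxy := hf (⟨_, hx⟩ * ⟨_, hy⟩) (⟨h₁, hh₁⟩ * MulAut.conjNormal (a ^ k₁) ⟨h₂, hh₂⟩)
      (k₁ + k₂) (by simp only [Subgroup.coe_mul, MulAut.conjNormal_apply]; group)
    rw [hxy, hf _ ⟨h₁, hh₁⟩ k₁ rfl, hf _ ⟨h₂, hh₂⟩ k₂ rfl, map_mul, hconj, zpow_add,
      mul_mul_mul_comm]
  refine ⟨MonoidHom.mk' f hmul, fun h => ?_, ?_⟩
  · simpa using hf _ h 0 (by simp)
  · simpa using hf _ 1 1 (by simp)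

theorem MonoidHom.comp_conjNormal_eq_self [H.Normal] [K.Normal] (hHK : H ≤ K) (haK : a ∈ K)
    (hK : ∀ x ∈ K, ∃ h ∈ H, ∃ k : ℤ, h * a ^ k = x) {b : G} (hc : a * b * a * b⁻¹ ∈ H)
    {φ : H →* M} (hφ : ∀ h, φ (MulAut.conjNormal b h) = φ h) {ψ : K →* M}
    (hψ : ∀ h : H, ψ (Subgroup.inclusion hHK h) = φ h) (hψa : ψ ⟨a, haK⟩ ^ 2 = φ ⟨_, hc⟩) :
    ψ.comp (MulAut.conjNormal b).toMonoidHom = ψ := by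
  refine MonoidHom.ext_of_forall_mem_mul_zpow hHK haK hK (fun h => ?_) ?_
  · calc ψ (MulAut.conjNormal b (Subgroup.inclusion hHK h))
        = ψ (Subgroup.inclusion hHK (MulAut.conjNormal b h)) :=
          congrArg ψ (Subtype.ext (by simp [MulAut.conjNormal_apply]))
      _ = ψ (Subgroup.inclusion hHK h) := by rw [hψ, hψ, hφ]
  · have hba : MulAut.conjNormal b ⟨a, haK⟩
        = (⟨a, haK⟩ : K)⁻¹ * Subgroup.inclusion hHK ⟨_, hc⟩ :=
      Subtype.ext (by
        simp only [MulAut.conjNormal_apply, Subgroup.coe_mul, Subgroup.coe_inv,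
          Subgroup.coe_inclusion]
        group)
    change ψ (MulAut.conjNormal b ⟨a, haK⟩) = _
    rw [hba, map_mul, map_inv, hψ, ← hψa, sq, inv_mul_cancel_left]

end Extension

/-- In the dihedral setup (`G/H ≅ D_n` with `n` even, `aⁿ, b², (ab)² ∈ H`, `a` mapping to
the rotation of order `n` and `b` to a reflection), a `G`-invariant one-dimensional
representation `φ : H → ℂˣ` extends to a one-dimensional representation of `G` if and
only if `φ(aⁿ) = φ(a b a b⁻¹)^(n/2)`. -/
theorem dihedral_extension_iff {G : Type} [Group G]
    (H : Subgroup G) [hN : H.Normal] (n : ℕ) (a b : G)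
    (hev : Even n)
    (ha : a ^ n ∈ H) (hb : b ^ 2 ∈ H)
    (hmem : a * b * a * b⁻¹ ∈ H)
    (hdih : ∃ e : (G ⧸ H) ≃* DihedralGroup n,
      e ((a : G ⧸ H)) = DihedralGroup.r 1 ∧ e ((b : G ⧸ H)) = DihedralGroup.sr 0)
    (φ : H →* ℂˣ)
    (hinv : ∀ (g : G) (h : H),
      φ ⟨g⁻¹ * (h : G) * g, by simpa using hN.conj_mem h h.2 g⁻¹⟩ = φ h) :
    (∃ ψ : G →* ℂˣ, ∀ h : H, ψ (h : G) = φ h) ↔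
      φ ⟨a ^ n, ha⟩ = (φ ⟨a * b * a * b⁻¹, hmem⟩) ^ (n / 2) := by
  constructor
  · rintro ⟨ψ, hψ⟩
    rw [← hψ, ← hψ, map_pow, ψ.map_mul_mul_mul_inv, ← pow_mul, Nat.two_mul_div_two_of_even hev]
  intro hcond
  obtain ⟨e, hea, heb⟩ := hdih
  let E : G →* DihedralGroup n := e.toMonoidHom.comp (QuotientGroup.mk' H)
  have hkerE : E.ker = H := by ext; simp [E]
  let χ := (DihedralGroup.sign n).comp E
  have hχb : χ b = -1 := by simp [χ, E, heb]
  have hHH₁ : H ≤ χ.ker := hkerE ▸ (E.ker_le_comap _).trans_eq (MonoidHom.comap_ker _ _)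
  have haH₁ : a ∈ χ.ker := by simp [χ, E, hea]
  have hcover₁ : ∀ x ∈ χ.ker, ∃ h ∈ H, ∃ k : ℤ, h * a ^ k = x := fun x hx =>
    hkerE ▸ DihedralGroup.exists_mem_ker_mul_zpow_eq_of_sign_eq_one E hea hx
  have hord₁ : ∀ k : ℤ, a ^ k ∈ H → (n : ℤ) ∣ k := fun k hk => by
    rwa [← hkerE, E.zpow_mem_ker_iff, show E a = _ from hea, DihedralGroup.orderOf_r_one] at hk
  have hord₂ : ∀ k : ℤ, b ^ k ∈ χ.ker → ((2 : ℕ) : ℤ) ∣ k := fun k hk => by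
    rwa [χ.zpow_mem_ker_iff, hχb, Int.orderOf_units_neg_one] at hk
  have hconj : ∀ (g : G) (h : H), φ (MulAut.conjNormal g h) = φ h := fun g h =>
    (congrArg φ (Subtype.ext (by simp [MulAut.conjNormal_apply]))).trans (hinv g⁻¹ h)
  obtain ⟨α, hα⟩ := IsAlgClosed.exists_units_pow_eq (φ ⟨_, hmem⟩) two_pos
  obtain ⟨ψ₁, hψ₁H, hψ₁a⟩ :=
    φ.exists_extension_of_forall_mem_mul_zpow hHH₁ haH₁ hcover₁ (hconj a)
      (φ.forall_eq_zpow_of_dvd hord₁ (h₀ := ⟨a ^ n, ha⟩) rfl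
        (by rw [hcond, ← hα, ← pow_mul, Nat.two_mul_div_two_of_even hev]))
  obtain ⟨β, hβ⟩ := IsAlgClosed.exists_units_pow_eq (ψ₁ ⟨b ^ 2, hHH₁ hb⟩) two_pos
  obtain ⟨ψ₂, hψ₂, -⟩ :=
    ψ₁.exists_extension_of_forall_mem_mul_zpow le_top (Subgroup.mem_top b)
      (fun x _ => χ.exists_mem_ker_mul_zpow_eq_of_eq_neg_one hχb x)
      (DFunLike.congr_fun (MonoidHom.comp_conjNormal_eq_self hHH₁ haH₁ hcover₁ hmem (hconj b)
        hψ₁H (hψ₁a ▸ hα)))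
      (ψ₁.forall_eq_zpow_of_dvd hord₂ rfl hβ.symm)
  exact ⟨ψ₂.comp (Subgroup.topEquiv (G := G)).symm.toMonoidHom, fun h => (hψ₂ _).trans (hψ₁H h)⟩
end
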